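/- arXiv:2504.00768 — 2 statements merged into one kernel-verified Lean document; each statement's English description precedes it below -/
import Mathlib

section
/- For every integer n ≥ 1, the linear operator Ω_n (defined as in the previous context) has trivial kernel when restricted to polynomials P(ν_b, ν_w) ∈ ℚ[ν_b, ν_w] of total degree at most n that satisfy the symmetry condition P(ν_b, 0) = P(0, ν_b) (as polynomials in one variable). That is, if such a polynomial P satisfies Ω_n(P) = 0, then P = 0. -/
open MvPolynomial

/-!
Conjugation by `U = 1 - ν_b ν_w` only shifts a parameter: `Ω_n (U^k Q) = U^k Ω_{n,n-k} Q`,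
where `Ω_{n,m}` is `Ω_n` with the `n` of its inner factors replaced by `m`. Modulo `U`, i.e. on
the hyperbola `ν_b ν_w = 1` parametrised by `ν_w = T`, `ν_b = T⁻¹`, every `∂`-term carrying a
factor `U` vanishes and `D_w - D_b` becomes `T d/dT`. So if `Ω_{n,m} Q = 0` with `m ≠ 0`, the
Laurent coefficients `f_j` of `Q` on the hyperbola satisfy
`(n+1+j)(f_{j-2} + f_{j+1}) = (3/2)(m+1) f_{j-2}`.
At the lowest index this forces `f_{-n} ≠ 0` unless `U ∣ Q`, which a `Q` of degree `≤ n - 2k`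
allows only for `k = 0`; at the highest index it forces `f_n = 0` when `m = n`. For `P` of
degree `≤ n`, `f_{-n}` and `f_n` are the coefficients of `ν_b^n` and `ν_w^n`, equal by the
symmetry condition. Hence every power of `U` divides `P`, and `P = 0`.
-/

namespace Stmt2

/-- The operator Ω_n := (2/3)(n + 1 + D_w − D_b) ∘ ((ν_w² + ν_b) n
    + ν_w (1 − ν_b ν_w) ∂_b + (1 − ν_b ν_w) ∂_w)
    − (ν_w (n+1) + (1 − ν_b ν_w) ∂_b) ∘ (ν_w n + (1 − ν_b ν_w) ∂_b),
acting on ℚ[ν_b, ν_w] with ν_b = X 0, ν_w = X 1. -/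
noncomputable def Omega (n : ℕ) (P : MvPolynomial (Fin 2) ℚ) : MvPolynomial (Fin 2) ℚ :=
  let νb : MvPolynomial (Fin 2) ℚ := X 0
  let νw : MvPolynomial (Fin 2) ℚ := X 1
  let Q1 := (n : MvPolynomial (Fin 2) ℚ) * ((νw ^ 2 + νb) * P)
      + νw * (1 - νb * νw) * pderiv (0 : Fin 2) P + (1 - νb * νw) * pderiv (1 : Fin 2) P
  let Q2 := ((n : MvPolynomial (Fin 2) ℚ) + 1) * Q1 + νw * pderiv (1 : Fin 2) Q1
      - νb * pderiv (0 : Fin 2) Q1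
  let R1 := (n : MvPolynomial (Fin 2) ℚ) * (νw * P) + (1 - νb * νw) * pderiv (0 : Fin 2) P
  let R2 := ((n : MvPolynomial (Fin 2) ℚ) + 1) * (νw * R1) + (1 - νb * νw) * pderiv (0 : Fin 2) R1
  (2 / 3 : ℚ) • Q2 - R2

lemma coeff_aeval_single_X {σ R : Type*} [CommSemiring R] [DecidableEq σ] (i : σ)
    (F : MvPolynomial σ R) (d : ℕ) :
    (aeval (Pi.single i Polynomial.X) F).coeff d = F.coeff (Finsupp.single i d) := by
  induction F using MvPolynomial.induction_on' with
  | monomial s c =>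
    rw [aeval_monomial, coeff_monomial]
    by_cases hs : ∃ e, s = Finsupp.single i e
    · obtain ⟨e, rfl⟩ := hs
      rw [Finsupp.prod_single_index (by rw [pow_zero]), Pi.single_eq_same,
        Polynomial.algebraMap_apply, Polynomial.coeff_C_mul_X_pow]
      simp only [(Finsupp.single_injective i).eq_iff, eq_comm, Algebra.algebraMap_self,
        RingHom.id_apply]
    · obtain ⟨j, hji, hj⟩ : ∃ j ≠ i, s j ≠ 0 := by
        by_contra! H
        exact hs ⟨s i, Finsupp.ext fun j => by
          by_cases hji : j = i
          · simp [hji]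
          · simp [H j hji, Finsupp.single_eq_of_ne hji]⟩
      rw [Finsupp.prod, Finset.prod_eq_zero (Finsupp.mem_support_iff.mpr hj)
        (by rw [Pi.single_eq_of_ne hji, zero_pow hj]), mul_zero, Polynomial.coeff_zero, if_neg]
      rintro rfl
      exact hj (Finsupp.single_eq_of_ne hji)
  | add F G hF hG => simp [hF, hG]

lemma coeff_single_zero_eq_coeff_single_one {P : MvPolynomial (Fin 2) ℚ}
    (hsym : aeval ![Polynomial.X, 0] P = aeval ![(0 : Polynomial ℚ), Polynomial.X] P) (d : ℕ) :
    P.coeff (Finsupp.single 0 d) = P.coeff (Finsupp.single 1 d) := by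
  have h0 : ![Polynomial.X, 0] = Pi.single (0 : Fin 2) (Polynomial.X : Polynomial ℚ) := by
    ext j : 1; fin_cases j <;> rfl
  have h1 : ![0, Polynomial.X] = Pi.single (1 : Fin 2) (Polynomial.X : Polynomial ℚ) := by
    ext j : 1; fin_cases j <;> rfl
  rw [← coeff_aeval_single_X, ← coeff_aeval_single_X, ← h0, ← h1, hsym]

lemma fin_two_finsupp_eq (s : Fin 2 →₀ ℕ) :
    s = Finsupp.single 0 (s 0) + Finsupp.single 1 (s 1) := by
  ext i
  fin_cases i <;> simp

lemma sum_le_totalDegree {F : MvPolynomial (Fin 2) ℚ} {s : Fin 2 →₀ ℕ}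
    (hs : s ∈ F.support) :
    s 0 + s 1 ≤ F.totalDegree := by
  simpa [Finsupp.sum_fintype, Fin.sum_univ_two] using le_totalDegree hs

lemma monomial_eq_C_mul_X_pow_mul_X_pow (s : Fin 2 →₀ ℕ) (c : ℚ) :
    monomial s c = C c * X 0 ^ s 0 * X 1 ^ s 1 := by
  rw [monomial_eq, Finsupp.prod_fintype _ _ fun _ => pow_zero _, Fin.prod_univ_two, mul_assoc]

def SatisfiesRecurrence (α : ℤ) (β : ℚ) (f : ℤ →₀ ℚ) : Prop :=
  ∀ j : ℤ, ((α + j : ℤ) : ℚ) * (f (j - 2) + f (j + 1)) = β * f (j - 2)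

namespace SatisfiesRecurrence

variable {α : ℤ} {β : ℚ} {f : ℤ →₀ ℚ}

lemma apply_one_sub_ne_zero (h : SatisfiesRecurrence α β f) (hf : f ≠ 0) :
    f (1 - α) ≠ 0 := by
  have hne : f.support.Nonempty := Finsupp.support_nonempty_iff.mpr hf
  set a := f.support.min' hne
  have ha : f a ≠ 0 := Finsupp.mem_support_iff.mp (f.support.min'_mem hne)
  have hbelow : f (a - 3) = 0 :=
    Finsupp.notMem_support_iff.mp fun hmem => by linarith [f.support.min'_le _ hmem]
  have hrec := h (a - 1)
  rw [show a - 1 - 2 = a - 3 by ring, sub_add_cancel, hbelow, zero_add, mul_zero,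
    mul_eq_zero] at hrec
  have hα : α + (a - 1) = 0 := by exact_mod_cast hrec.resolve_right ha
  rwa [show 1 - α = a by linarith]

lemma apply_eq_zero (h : SatisfiesRecurrence α β f) {j : ℤ} (hj : β < α + j + 2) :
    f j = 0 := by
  by_contra hfj
  have hne : f.support.Nonempty := ⟨j, Finsupp.mem_support_iff.mpr hfj⟩
  set b := f.support.max' hne
  have hb : f b ≠ 0 := Finsupp.mem_support_iff.mp (f.support.max'_mem hne)
  have hjb : j ≤ b := f.support.le_max' j (Finsupp.mem_support_iff.mpr hfj)
  have habove : f (b + 3) = 0 :=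
    Finsupp.notMem_support_iff.mp fun hmem => by linarith [f.support.le_max' _ hmem]
  have hrec := h (b + 2)
  rw [add_sub_cancel_right, show b + 2 + 1 = b + 3 by ring, habove, add_zero] at hrec
  have hβ : ((α + (b + 2) : ℤ) : ℚ) = β := mul_right_cancel₀ hb hrec
  have : (j : ℚ) ≤ b := by exact_mod_cast hjb
  push_cast at hβ
  linarith

end SatisfiesRecurrence

noncomputable def U : MvPolynomial (Fin 2) ℚ := 1 - X 0 * X 1

noncomputable def euler (F : MvPolynomial (Fin 2) ℚ) : MvPolynomial (Fin 2) ℚ :=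
  X 1 * pderiv 1 F - X 0 * pderiv 0 F

noncomputable def innerOp (m : ℚ) (F : MvPolynomial (Fin 2) ℚ) : MvPolynomial (Fin 2) ℚ :=
  C m * ((X 1 ^ 2 + X 0) * F) + X 1 * U * pderiv 0 F + U * pderiv 1 F

noncomputable def outerOp (c : ℚ) (F : MvPolynomial (Fin 2) ℚ) : MvPolynomial (Fin 2) ℚ :=
  C c * F + euler F

noncomputable def ladderOp (m : ℚ) (F : MvPolynomial (Fin 2) ℚ) : MvPolynomial (Fin 2) ℚ :=
  C m * (X 1 * F) + U * pderiv 0 F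

noncomputable def omegaAt (n : ℕ) (m : ℚ) (F : MvPolynomial (Fin 2) ℚ) :
    MvPolynomial (Fin 2) ℚ :=
  (2 / 3 : ℚ) • outerOp (n + 1) (innerOp m F) - ladderOp (m + 1) (ladderOp m F)

lemma Omega_eq_omegaAt (n : ℕ) (P : MvPolynomial (Fin 2) ℚ) : Omega n P = omegaAt n n P := by
  simp only [Omega, omegaAt, outerOp, innerOp, ladderOp, euler, U, ← C_eq_coe_nat, map_add,
    map_one, add_sub_assoc]

lemma pderiv_U_zero : pderiv 0 U = -X 1 := by simp [U]

lemma pderiv_U_one : pderiv 1 U = -X 0 := by simp [U]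

lemma innerOp_U_mul (m : ℚ) (F : MvPolynomial (Fin 2) ℚ) :
    innerOp m (U * F) = U * innerOp (m - 1) F := by
  simp only [innerOp, Derivation.leibniz, pderiv_U_zero, pderiv_U_one, smul_eq_mul, map_sub,
    map_one]
  ring

lemma euler_U_mul (F : MvPolynomial (Fin 2) ℚ) : euler (U * F) = U * euler F := by
  simp only [euler, Derivation.leibniz, pderiv_U_zero, pderiv_U_one, smul_eq_mul]
  ring

lemma outerOp_U_mul (c : ℚ) (F : MvPolynomial (Fin 2) ℚ) :
    outerOp c (U * F) = U * outerOp c F := by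
  rw [outerOp, outerOp, euler_U_mul]
  ring

lemma ladderOp_U_mul (m : ℚ) (F : MvPolynomial (Fin 2) ℚ) :
    ladderOp m (U * F) = U * ladderOp (m - 1) F := by
  simp only [ladderOp, Derivation.leibniz, pderiv_U_zero, smul_eq_mul, map_sub, map_one]
  ring

lemma omegaAt_U_mul (n : ℕ) (m : ℚ) (F : MvPolynomial (Fin 2) ℚ) :
    omegaAt n m (U * F) = U * omegaAt n (m - 1) F := by
  rw [omegaAt, omegaAt, innerOp_U_mul, outerOp_U_mul, ladderOp_U_mul, ladderOp_U_mul,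
    add_sub_cancel_right, sub_add_cancel, mul_sub, mul_smul_comm]

lemma Omega_U_pow_mul (n k : ℕ) (Q : MvPolynomial (Fin 2) ℚ) :
    Omega n (U ^ k * Q) = U ^ k * omegaAt n (n - k) Q := by
  induction k generalizing Q with
  | zero => simp [Omega_eq_omegaAt]
  | succ k ih =>
    rw [pow_succ, mul_assoc, ih, omegaAt_U_mul, ← mul_assoc, ← pow_succ, Nat.cast_succ, sub_sub]

lemma totalDegree_U : U.totalDegree = 2 := by
  have hXY : (X 0 * X 1 : MvPolynomial (Fin 2) ℚ).totalDegree = 2 := by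
    rw [totalDegree_mul_of_isDomain (X_ne_zero _) (X_ne_zero _), totalDegree_X, totalDegree_X]
  rw [U, sub_eq_add_neg, totalDegree_add_eq_right_of_totalDegree_lt] <;>
    simp [totalDegree_neg, hXY]

lemma U_ne_zero : U ≠ 0 := by
  intro h
  simpa [h] using totalDegree_U

lemma totalDegree_U_pow (k : ℕ) : (U ^ k).totalDegree = 2 * k := by
  induction k with
  | zero => simp
  | succ k ih =>
    rw [pow_succ, totalDegree_mul_of_isDomain (pow_ne_zero _ U_ne_zero) U_ne_zero, ih,
      totalDegree_U]
    ring

section Laurent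

open LaurentPolynomial (T T_add T_pow T_apply)
open scoped LaurentPolynomial

lemma coeff_T_mul (n : ℤ) (f : ℚ[T;T⁻¹]) (j : ℤ) :
    (T n * f).coeff j = f.coeff (j - n) := by
  rw [T, AddMonoidAlgebra.coeff_single_mul_apply, one_mul, neg_add_eq_sub]

lemma coeff_smul_T (a : ℚ) (n j : ℤ) :
    (a • T n : ℚ[T;T⁻¹]).coeff j = if n = j then a else 0 := by
  rw [AddMonoidAlgebra.coeff_smul_apply, T_apply, smul_ite, smul_eq_mul, mul_one, smul_zero]

/-- Restriction to the hyperbola `ν_b ν_w = 1`; its kernel is the ideal `(U)`. -/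
noncomputable def evalHyperbola : MvPolynomial (Fin 2) ℚ →ₐ[ℚ] ℚ[T;T⁻¹] :=
  aeval ![T (-1), T 1]

lemma evalHyperbola_C_mul (c : ℚ) (F : MvPolynomial (Fin 2) ℚ) :
    evalHyperbola (C c * F) = c • evalHyperbola F := by
  rw [C_mul', map_smul]

@[simp] lemma evalHyperbola_X_zero : evalHyperbola (X 0) = T (-1) := by simp [evalHyperbola]

@[simp] lemma evalHyperbola_X_one : evalHyperbola (X 1) = T 1 := by simp [evalHyperbola]

@[simp] lemma evalHyperbola_U : evalHyperbola U = 0 := by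
  rw [U, map_sub, map_one, map_mul, evalHyperbola_X_zero, evalHyperbola_X_one, ← T_add,
    neg_add_cancel, LaurentPolynomial.T_zero, sub_self]

lemma evalHyperbola_monomial (s : Fin 2 →₀ ℕ) (c : ℚ) :
    evalHyperbola (monomial s c) = c • T ((s 1 : ℤ) - s 0) := by
  rw [monomial_eq_C_mul_X_pow_mul_X_pow, mul_assoc, evalHyperbola_C_mul, map_mul, map_pow, map_pow,
    evalHyperbola_X_zero, evalHyperbola_X_one, T_pow, T_pow, ← T_add]
  congr 2
  ring

lemma coeff_evalHyperbola (F : MvPolynomial (Fin 2) ℚ) (j : ℤ) :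
    (evalHyperbola F).coeff j = ∑ s ∈ F.support with (s 1 : ℤ) - s 0 = j, F.coeff s := by
  conv_lhs => rw [F.as_sum]
  simp only [map_sum, AddMonoidAlgebra.coeff_sum, Finsupp.finsetSum_apply,
    evalHyperbola_monomial, coeff_smul_T, Finset.sum_filter]

lemma neg_totalDegree_le_of_coeff_evalHyperbola_ne_zero {F : MvPolynomial (Fin 2) ℚ} {j : ℤ}
    (h : (evalHyperbola F).coeff j ≠ 0) : -(F.totalDegree : ℤ) ≤ j := by
  rw [coeff_evalHyperbola] at h
  obtain ⟨s, hs, -⟩ := Finset.exists_ne_zero_of_sum_ne_zero h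
  rw [Finset.mem_filter] at hs
  have := sum_le_totalDegree hs.1
  omega

lemma coeff_evalHyperbola_eq_coeff {F : MvPolynomial (Fin 2) ℚ} {t : Fin 2 →₀ ℕ}
    (huniq : ∀ s ∈ F.support, (s 1 : ℤ) - s 0 = (t 1 : ℤ) - t 0 → s = t) :
    (evalHyperbola F).coeff ((t 1 : ℤ) - t 0) = F.coeff t := by
  rw [coeff_evalHyperbola, Finset.sum_filter, Finset.sum_eq_single t, if_pos rfl]
  · exact fun s hs hne => if_neg fun h => hne (huniq s hs h)
  · exact fun ht => if_pos rfl ▸ notMem_support_iff.mp ht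

lemma coeff_evalHyperbola_neg_of_totalDegree_le {F : MvPolynomial (Fin 2) ℚ} {d : ℕ}
    (hF : F.totalDegree ≤ d) :
    (evalHyperbola F).coeff (-d) = F.coeff (Finsupp.single 0 d) := by
  convert coeff_evalHyperbola_eq_coeff fun s hs hsd => ?_ using 2
  · simp
  · have := sum_le_totalDegree hs
    simp only [Finsupp.single_eq_same, Finsupp.single_eq_of_ne (by decide : (1 : Fin 2) ≠ 0)]
      at hsd
    rw [fin_two_finsupp_eq s, show s 0 = d by omega, show s 1 = 0 by omega, Finsupp.single_zero,
      add_zero]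

lemma coeff_evalHyperbola_of_totalDegree_le {F : MvPolynomial (Fin 2) ℚ} {d : ℕ}
    (hF : F.totalDegree ≤ d) :
    (evalHyperbola F).coeff d = F.coeff (Finsupp.single 1 d) := by
  convert coeff_evalHyperbola_eq_coeff fun s hs hsd => ?_ using 2
  · simp
  · have := sum_le_totalDegree hs
    simp only [Finsupp.single_eq_same, Finsupp.single_eq_of_ne (by decide : (0 : Fin 2) ≠ 1)]
      at hsd
    rw [fin_two_finsupp_eq s, show s 0 = 0 by omega, show s 1 = d by omega, Finsupp.single_zero,
      zero_add]

/-- A section of `evalHyperbola` modulo `U`: `T^k ↦ ν_w^k`, `T^(-k) ↦ ν_b^k` for `k ≥ 0`. -/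
noncomputable def hyperbolaLift : (ℤ →₀ ℚ) →ₗ[ℚ] MvPolynomial (Fin 2) ℚ :=
  Finsupp.linearCombination ℚ fun k => X 0 ^ (-k).toNat * X 1 ^ k.toNat

lemma U_dvd_mul_X_mul_X_pow_sub (G : MvPolynomial (Fin 2) ℚ) (k : ℕ) :
    U ∣ G * (X 0 * X 1) ^ k - G := by
  have h : U ∣ (X 0 * X 1) ^ k - 1 := by
    rw [U, ← neg_sub, neg_dvd]
    simpa using sub_dvd_pow_sub_pow (X 0 * X 1 : MvPolynomial (Fin 2) ℚ) 1 k
  rw [← mul_sub_one]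
  exact h.mul_left G

lemma U_dvd_sub_hyperbolaLift (F : MvPolynomial (Fin 2) ℚ) :
    U ∣ F - hyperbolaLift (evalHyperbola F).coeff := by
  induction F using MvPolynomial.induction_on' with
  | monomial s c =>
    rw [evalHyperbola_monomial, AddMonoidAlgebra.coeff_smul, LaurentPolynomial.T,
      AddMonoidAlgebra.coeff_single, Finsupp.smul_single, smul_eq_mul, mul_one, hyperbolaLift,
      Finsupp.linearCombination_single, smul_eq_C_mul, monomial_eq_C_mul_X_pow_mul_X_pow]
    rcases le_total (s 0) (s 1) with h | h
    · obtain ⟨e, he⟩ := Nat.exists_eq_add_of_le h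
      convert U_dvd_mul_X_mul_X_pow_sub (C c * X 1 ^ e) (s 0) using 2
      · rw [he]; ring
      · rw [he]; push_cast; simp
    · obtain ⟨e, he⟩ := Nat.exists_eq_add_of_le h
      convert U_dvd_mul_X_mul_X_pow_sub (C c * X 0 ^ e) (s 1) using 2
      · rw [he]; ring
      · rw [he]; push_cast; simp
  | add F G hF hG =>
    rw [map_add, AddMonoidAlgebra.coeff_add, map_add, add_sub_add_comm]
    exact dvd_add hF hG

lemma U_dvd_of_coeff_evalHyperbola_eq_zero {F : MvPolynomial (Fin 2) ℚ}
    (h : (evalHyperbola F).coeff = 0) : U ∣ F := by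
  simpa [h] using U_dvd_sub_hyperbolaLift F

lemma euler_add (F G : MvPolynomial (Fin 2) ℚ) : euler (F + G) = euler F + euler G := by
  simp only [euler, map_add]
  ring

lemma euler_monomial (s : Fin 2 →₀ ℕ) (c : ℚ) :
    euler (monomial s c) = ((s 1 : ℚ) - s 0) • monomial s c := by
  rw [euler, X_mul_pderiv_monomial, X_mul_pderiv_monomial, sub_smul, Nat.cast_smul_eq_nsmul,
    Nat.cast_smul_eq_nsmul]

lemma coeff_evalHyperbola_euler (F : MvPolynomial (Fin 2) ℚ) (j : ℤ) :
    (evalHyperbola (euler F)).coeff j = j * (evalHyperbola F).coeff j := by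
  induction F using MvPolynomial.induction_on' with
  | monomial s c =>
    rw [euler_monomial, map_smul, evalHyperbola_monomial, smul_smul, coeff_smul_T, coeff_smul_T]
    split_ifs with h
    · rw [← h]; push_cast; ring
    · simp
  | add F G hF hG =>
    rw [euler_add, map_add, AddMonoidAlgebra.coeff_add, Finsupp.add_apply, hF, hG, map_add,
      AddMonoidAlgebra.coeff_add, Finsupp.add_apply, mul_add]

lemma evalHyperbola_innerOp (m : ℚ) (F : MvPolynomial (Fin 2) ℚ) :
    evalHyperbola (innerOp m F) = m • ((T 2 + T (-1)) * evalHyperbola F) := by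
  simp [innerOp, evalHyperbola_C_mul, T_pow]

lemma evalHyperbola_ladderOp (m : ℚ) (F : MvPolynomial (Fin 2) ℚ) :
    evalHyperbola (ladderOp m F) = m • (T 1 * evalHyperbola F) := by
  simp [ladderOp, evalHyperbola_C_mul]

lemma coeff_evalHyperbola_outerOp (c : ℚ) (F : MvPolynomial (Fin 2) ℚ) (j : ℤ) :
    (evalHyperbola (outerOp c F)).coeff j = (c + j) * (evalHyperbola F).coeff j := by
  rw [outerOp, map_add, evalHyperbola_C_mul, AddMonoidAlgebra.coeff_add, Finsupp.add_apply,
    AddMonoidAlgebra.coeff_smul_apply, coeff_evalHyperbola_euler, smul_eq_mul, add_mul]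

lemma coeff_evalHyperbola_omegaAt (n : ℕ) (m : ℚ) (F : MvPolynomial (Fin 2) ℚ) (j : ℤ) :
    (evalHyperbola (omegaAt n m F)).coeff j =
      2 / 3 * m * (n + 1 + j) * ((evalHyperbola F).coeff (j - 2) + (evalHyperbola F).coeff (j + 1))
        - m * (m + 1) * (evalHyperbola F).coeff (j - 2) := by
  simp only [omegaAt, map_sub, map_smul, AddMonoidAlgebra.coeff_sub, Finsupp.sub_apply,
    AddMonoidAlgebra.coeff_smul_apply, coeff_evalHyperbola_outerOp, evalHyperbola_innerOp,
    evalHyperbola_ladderOp, add_mul, AddMonoidAlgebra.coeff_add, Finsupp.add_apply, coeff_T_mul,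
    smul_eq_mul]
  rw [show j - 1 - 1 = j - 2 by ring, sub_neg_eq_add]
  ring

lemma satisfiesRecurrence_of_omegaAt_eq_zero {n : ℕ} {m : ℚ} {F : MvPolynomial (Fin 2) ℚ}
    (hm : m ≠ 0) (h : omegaAt n m F = 0) :
    SatisfiesRecurrence (n + 1) (3 / 2 * (m + 1)) (evalHyperbola F).coeff := by
  intro j
  have hj := coeff_evalHyperbola_omegaAt n m F j
  rw [h, map_zero, AddMonoidAlgebra.coeff_zero, Finsupp.coe_zero, Pi.zero_apply] at hj
  apply mul_left_cancel₀ (mul_ne_zero (by norm_num : (2 / 3 : ℚ) ≠ 0) hm)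
  push_cast
  linear_combination -hj

end Laurent

lemma U_dvd_of_Omega_U_pow_mul_eq_zero {n k : ℕ} (hn : 1 ≤ n) {Q : MvPolynomial (Fin 2) ℚ}
    (hdeg : (U ^ k * Q).totalDegree ≤ n)
    (hsym : aeval ![Polynomial.X, 0] (U ^ k * Q)
      = aeval ![(0 : Polynomial ℚ), Polynomial.X] (U ^ k * Q))
    (h0 : Omega n (U ^ k * Q) = 0) : U ∣ Q := by
  by_contra hUQ
  have hQ : Q ≠ 0 := by rintro rfl; exact hUQ (dvd_zero U)
  rw [totalDegree_mul_of_isDomain (pow_ne_zero k U_ne_zero) hQ, totalDegree_U_pow] at hdeg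
  have hm : (n : ℚ) - k ≠ 0 := by
    rw [sub_ne_zero]
    exact_mod_cast (show k < n by omega).ne'
  rw [Omega_U_pow_mul] at h0
  have hrec := satisfiesRecurrence_of_omegaAt_eq_zero hm
    ((mul_eq_zero.mp h0).resolve_left (pow_ne_zero k U_ne_zero))
  have hlow := hrec.apply_one_sub_ne_zero fun hf => hUQ (U_dvd_of_coeff_evalHyperbola_eq_zero hf)
  rw [show (1 : ℤ) - (n + 1) = -n by ring] at hlow
  have hk : k = 0 := by
    have := neg_totalDegree_le_of_coeff_evalHyperbola_ne_zero hlow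
    omega
  subst hk
  rw [pow_zero, one_mul] at hsym
  have hQn : Q.totalDegree ≤ n := by omega
  have hhigh : (evalHyperbola Q).coeff n = 0 := hrec.apply_eq_zero (by push_cast; linarith)
  apply hlow
  rw [coeff_evalHyperbola_neg_of_totalDegree_le hQn, coeff_single_zero_eq_coeff_single_one hsym,
    ← coeff_evalHyperbola_of_totalDegree_le hQn, hhigh]

/-- for n ≥ 1, Ω_n has trivial kernel on polynomials of total degree
at most n satisfying the symmetry condition P(ν_b, 0) = P(0, ν_b). -/
theorem stmt_2 (n : ℕ) (hn : 1 ≤ n) (P : MvPolynomial (Fin 2) ℚ)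
    (hdeg : P.totalDegree ≤ n)
    (hsym : aeval ![Polynomial.X, 0] P = aeval ![(0 : Polynomial ℚ), Polynomial.X] P)
    (h0 : Omega n P = 0) : P = 0 := by
  by_contra hP
  have hdvd : ∀ k, U ^ k ∣ P := by
    intro k
    induction k with
    | zero => exact pow_zero U ▸ one_dvd P
    | succ k ih =>
      obtain ⟨Q, rfl⟩ := ih
      rw [pow_succ]
      exact mul_dvd_mul_left _ (U_dvd_of_Omega_U_pow_mul_eq_zero hn hdeg hsym h0)
  have hU := totalDegree_le_of_dvd_of_isDomain (hdvd (n + 1)) hP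
  rw [totalDegree_U_pow] at hU
  omega

end Stmt2
end

section
/- Let D_t = t ∂/∂t, D_b = ν_b ∂/∂ν_b, D_w = ν_w ∂/∂ν_w, ∂_b = ∂/∂ν_b, ∂_w = ∂/∂ν_w, and let Λ := 2t²((ν_w² + ν_b) D_t + ν_w (1 − ν_b ν_w) ∂_b + (1 − ν_b ν_w) ∂_w). With 𝔸 and ⪰ as above, for every integer k ≥ 1 one has Λ^k ⪰ 2^k t^{2k} ( Σ_{j=0}^{k} C(k,j) ν_w^{2j} ν_b^{k−j} (D_t − D_b)^j (D_t − D_w)^{k−j} ) ⪰ 0, where C(k,j) is the binomial coefficient. -/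
namespace Stmt6

/-- Formal power series in t, s, ν_b, ν_w with real coefficients
(variable 0 = t, 1 = s, 2 = ν_b, 3 = ν_w). -/
abbrev R4 : Type := MvPowerSeries (Fin 4) ℝ

noncomputable def T : R4 := MvPowerSeries.X 0
noncomputable def B : R4 := MvPowerSeries.X 2
noncomputable def W : R4 := MvPowerSeries.X 3

/-- D_t = t ∂/∂t. -/
noncomputable def Dt (f : R4) : R4 := fun d => (d 0 : ℝ) * f d
/-- D_b = ν_b ∂/∂ν_b. -/
noncomputable def Db (f : R4) : R4 := fun d => (d 2 : ℝ) * f d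
/-- D_w = ν_w ∂/∂ν_w. -/
noncomputable def Dw (f : R4) : R4 := fun d => (d 3 : ℝ) * f d
/-- ∂/∂ν_b. -/
noncomputable def pb (f : R4) : R4 := fun d => ((d 2 : ℕ) + 1 : ℝ) * f (d + Finsupp.single 2 1)
/-- ∂/∂ν_w. -/
noncomputable def pw (f : R4) : R4 := fun d => ((d 3 : ℕ) + 1 : ℝ) * f (d + Finsupp.single 3 1)

/-- Λ := 2t²((ν_w² + ν_b) D_t + ν_w (1 − ν_b ν_w) ∂_b + (1 − ν_b ν_w) ∂_w). -/
noncomputable def Lam (f : R4) : R4 :=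
  2 * T ^ 2 * ((W ^ 2 + B) * Dt f + W * (1 - B * W) * pb f + (1 - B * W) * pw f)

noncomputable def DtDb (f : R4) : R4 := Dt f - Db f
noncomputable def DtDw (f : R4) : R4 := Dt f - Dw f

/-- The operator 2^k t^{2k} Σ_{j=0}^{k} C(k,j) ν_w^{2j} ν_b^{k−j} (D_t−D_b)^j (D_t−D_w)^{k−j}. -/
noncomputable def Theta (k : ℕ) (f : R4) : R4 :=
  (2 ^ k : ℝ) • (T ^ (2 * k) *
    ∑ j ∈ Finset.range (k + 1),
      (Nat.choose k j : ℝ) • (W ^ (2 * j) * B ^ (k - j) * (DtDb^[j] (DtDw^[k - j] f))))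

/-- The semiring 𝔸: series with nonnegative coefficients supported on monomials
t^m s^g ν_b^a ν_w^b with m ≥ a + b.  Φ ⪰ Ψ means (Φ−Ψ)(𝔸) ⊆ 𝔸. -/
def A : Set R4 :=
  {f | ∀ d : Fin 4 →₀ ℕ, 0 ≤ MvPowerSeries.coeff d f ∧
    (MvPowerSeries.coeff d f ≠ 0 → d 2 + d 3 ≤ d 0)}

/-!
Since `ν_b ∂_b = D_b` and `ν_w ∂_w = D_w`, one has `Λ = Θ₁ + 2t²(ν_w ∂_b + ∂_w)`. The operators
`Φ ⪰ 0` form a semiring containing `D_t - D_w`, `D_t - D_b`, `∂_b`, `∂_w` and multiplication by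
elements of `𝔸`. The diagonal operators `D_t - D_w`, `D_t - D_b` commute with multiplication by a
monomial `t^a ν_b^b ν_w^c` up to the scalars `a - c`, resp. `a - b`, which are nonnegative integers
for the monomials `t^{2k} ν_w^{2j} ν_b^{k-j}` of `Θ_k`. Hence
`Θ₁ Θ_k = Θ_{k+1} + (a nonnegative combination of products of such operators)`, Pascal's rule
collecting the main terms, and
`Λ^{k+1} - Θ_{k+1} = Λ (Λ^k - Θ_k) + (Λ - Θ₁) Θ_k + (Θ₁ Θ_k - Θ_{k+1})` closes the induction.
-/

open MvPowerSeries Finset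

section WeightOperator

variable {σ R : Type*} [CommSemiring R]

noncomputable def degreeIn (i : σ) : (σ →₀ ℕ) →+ R :=
  (Nat.castAddMonoidHom R).comp (Finsupp.applyAddHom i)

noncomputable def weightOp (w : (σ →₀ ℕ) →+ R) : Module.End R (MvPowerSeries σ R) where
  toFun f := fun d => w d * coeff d f
  map_add' f g := by ext d; exact mul_add _ _ _
  map_smul' c f := by ext d; exact mul_left_comm _ _ _

theorem degreeIn_apply (i : σ) (d : σ →₀ ℕ) : degreeIn i d = (d i : R) :=
  rfl

theorem coeff_weightOp (w : (σ →₀ ℕ) →+ R) (f : MvPowerSeries σ R) (d : σ →₀ ℕ) :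
    coeff d (weightOp w f) = w d * coeff d f :=
  rfl

theorem commute_weightOp (w w' : (σ →₀ ℕ) →+ R) : Commute (weightOp w) (weightOp w') := by
  ext f d
  simp only [Module.End.mul_apply, coeff_weightOp, mul_left_comm]

theorem weightOp_mul_mulLeft_monomial (w : (σ →₀ ℕ) →+ R) (e : σ →₀ ℕ) :
    weightOp w * LinearMap.mulLeft R (monomial e 1) =
      LinearMap.mulLeft R (monomial e 1) * weightOp w +
        w e • LinearMap.mulLeft R (monomial e 1) := by
  ext f d
  simp only [Module.End.mul_apply, LinearMap.add_apply, LinearMap.smul_apply,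
    LinearMap.mulLeft_apply, map_add, map_smul, coeff_weightOp, coeff_monomial_mul, one_mul]
  split_ifs with h
  · rw [← tsub_add_cancel_of_le h, map_add, add_tsub_cancel_right, smul_eq_mul, add_mul]
  · simp

theorem X_mul_pderiv (i : σ) (f : MvPowerSeries σ R) :
    X i * pderiv R i f = weightOp (degreeIn i) f := by
  classical
  ext d
  rw [X_def, coeff_monomial_mul, coeff_weightOp, degreeIn_apply, one_mul]
  split_ifs with h
  · have hi : 1 ≤ d i := by simpa using h i
    rw [coeff_pderiv, tsub_add_cancel_of_le h, Finsupp.tsub_apply, Finsupp.single_eq_same,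
      ← Nat.cast_add_one, Nat.sub_add_cancel hi, mul_comm]
  · have hi : d i = 0 := by
      by_contra hi
      exact h (Finsupp.single_le_iff.mpr (Nat.one_le_iff_ne_zero.mpr hi))
    simp [hi]

end WeightOperator

theorem mul_mem_A {f g : R4} (hf : f ∈ A) (hg : g ∈ A) : f * g ∈ A := by
  classical
  intro d
  rw [coeff_mul]
  refine ⟨sum_nonneg fun p _ => mul_nonneg (hf p.1).1 (hg p.2).1, fun hne => ?_⟩
  obtain ⟨p, hp, hpne⟩ := exists_ne_zero_of_sum_ne_zero hne
  have h1 := (hf p.1).2 (left_ne_zero_of_mul hpne)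
  have h2 := (hg p.2).2 (right_ne_zero_of_mul hpne)
  rw [← mem_antidiagonal.mp hp]
  simp only [Finsupp.add_apply]
  omega

theorem add_mem_A {f g : R4} (hf : f ∈ A) (hg : g ∈ A) : f + g ∈ A := by
  intro d
  obtain ⟨hf0, hf1⟩ := hf d
  obtain ⟨hg0, hg1⟩ := hg d
  rw [map_add]
  refine ⟨add_nonneg hf0 hg0, fun hne => ?_⟩
  by_cases h : coeff d f = 0
  · exact hg1 (by simpa [h] using hne)
  · exact hf1 h

theorem monomial_one_mem_A {e : Fin 4 →₀ ℕ} (he : e 2 + e 3 ≤ e 0) : monomial e (1 : ℝ) ∈ A := by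
  classical
  intro d
  rw [coeff_monomial]
  split_ifs with h
  · exact ⟨zero_le_one, fun _ => h ▸ he⟩
  · simp

/-- The operators `Φ ⪰ 0`. -/
def posOps : Subsemiring (Module.End ℝ R4) where
  carrier := {Φ | Set.MapsTo Φ A A}
  mul_mem' hΦ hΨ := hΦ.comp hΨ
  one_mem' := Set.mapsTo_id A
  add_mem' hΦ hΨ _ hf := add_mem_A (hΦ hf) (hΨ hf)
  zero_mem' _ _ d := by simp

theorem mulLeft_mem_posOps {a : R4} (ha : a ∈ A) : LinearMap.mulLeft ℝ a ∈ posOps :=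
  fun _ hf => mul_mem_A ha hf

theorem weightOp_mem_posOps {w : (Fin 4 →₀ ℕ) →+ ℝ} (hw : ∀ d, d 2 + d 3 ≤ d 0 → 0 ≤ w d) :
    weightOp w ∈ posOps := by
  intro f hf d
  obtain ⟨h0, h1⟩ := hf d
  rw [coeff_weightOp]
  refine ⟨?_, fun hne => h1 (right_ne_zero_of_mul hne)⟩
  by_cases h : coeff d f = 0
  · simp [h]
  · exact mul_nonneg (hw d (h1 h)) h0

theorem pderiv_mem_posOps {i : Fin 4} (hi : i ≠ 0) :
    (pderiv ℝ i : Module.End ℝ R4) ∈ posOps := by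
  intro f hf d
  obtain ⟨h0, h1⟩ := hf (d + Finsupp.single i 1)
  rw [Derivation.coeFn_coe, coeff_pderiv]
  refine ⟨mul_nonneg h0 (by positivity), fun hne => ?_⟩
  have h := h1 (left_ne_zero_of_mul hne)
  simp only [Finsupp.add_apply, Finsupp.single_eq_of_ne hi.symm] at h
  omega

noncomputable def DtDwL : Module.End ℝ R4 := weightOp (degreeIn 0 - degreeIn 3)

noncomputable def DtDbL : Module.End ℝ R4 := weightOp (degreeIn 0 - degreeIn 2)

noncomputable def monoL (e : Fin 4 →₀ ℕ) : Module.End ℝ R4 := LinearMap.mulLeft ℝ (monomial e 1)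

noncomputable def expo (i m : ℕ) : Fin 4 →₀ ℕ :=
  Finsupp.single 0 (2 * (i + m)) + Finsupp.single 2 m + Finsupp.single 3 (2 * i)

-- The term `j = i` of `Θ_{i+m}`; indexing by `(i, m)` avoids truncated subtraction.
noncomputable def thetaTerm (i m : ℕ) : Module.End ℝ R4 := monoL (expo i m) * DtDbL ^ i * DtDwL ^ m

noncomputable def ThetaL (k : ℕ) : Module.End ℝ R4 :=
  ∑ i ∈ range (k + 1), (2 ^ k * k.choose i) • thetaTerm i (k - i)

noncomputable def restL : Module.End ℝ R4 :=
  2 • (LinearMap.mulLeft ℝ (T ^ 2 * W) * (pderiv ℝ (2 : Fin 4) : Module.End ℝ R4) +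
    LinearMap.mulLeft ℝ (T ^ 2) * (pderiv ℝ (3 : Fin 4) : Module.End ℝ R4))

noncomputable def LamL : Module.End ℝ R4 := ThetaL 1 + restL

theorem expo_apply_zero (i m : ℕ) : expo i m 0 = 2 * (i + m) := by simp [expo]
theorem expo_apply_two (i m : ℕ) : expo i m 2 = m := by simp [expo]
theorem expo_apply_three (i m : ℕ) : expo i m 3 = 2 * i := by simp [expo]

theorem expo_zero_one_add (i m : ℕ) : expo 0 1 + expo i m = expo i (m + 1) := by
  simp only [expo, mul_add, mul_zero, mul_one, zero_add, Finsupp.single_add, Finsupp.single_zero]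
  abel

theorem expo_one_zero_add (i m : ℕ) : expo 1 0 + expo i m = expo (i + 1) m := by
  simp only [expo, mul_add, mul_one, add_zero, Finsupp.single_add, Finsupp.single_zero]
  abel

theorem monoL_mul_monoL (e e' : Fin 4 →₀ ℕ) : monoL e * monoL e' = monoL (e + e') := by
  have h := monomial_mul_monomial e e' (1 : ℝ) 1
  rw [one_mul] at h
  rw [monoL, monoL, monoL, ← h, LinearMap.mulLeft_mul]
  rfl

theorem DtDwL_mul_monoL_expo (i m : ℕ) :
    DtDwL * monoL (expo i m) = monoL (expo i m) * DtDwL + (2 * m) • monoL (expo i m) := by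
  rw [DtDwL, monoL, weightOp_mul_mulLeft_monomial, ← Nat.cast_smul_eq_nsmul ℝ,
    AddMonoidHom.sub_apply, degreeIn_apply, degreeIn_apply, expo_apply_zero, expo_apply_three]
  congr 2
  push_cast
  ring

theorem DtDbL_mul_monoL_expo (i m : ℕ) :
    DtDbL * monoL (expo i m) = monoL (expo i m) * DtDbL + (2 * i + m) • monoL (expo i m) := by
  rw [DtDbL, monoL, weightOp_mul_mulLeft_monomial, ← Nat.cast_smul_eq_nsmul ℝ,
    AddMonoidHom.sub_apply, degreeIn_apply, degreeIn_apply, expo_apply_zero, expo_apply_two]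
  congr 2
  push_cast
  ring

theorem thetaTerm_zero_one_mul (i m : ℕ) :
    thetaTerm 0 1 * thetaTerm i m =
      thetaTerm i (m + 1) + (2 * m) • (monoL (expo i (m + 1)) * DtDbL ^ i * DtDwL ^ m) := by
  have hc : DtDwL * DtDbL ^ i = DtDbL ^ i * DtDwL :=
    ((commute_weightOp _ _ : Commute DtDbL DtDwL).pow_left i).eq.symm
  have hM (Z) : monoL (expo 0 1) * (monoL (expo i m) * Z) = monoL (expo i (m + 1)) * Z := by
    rw [← mul_assoc, monoL_mul_monoL, expo_zero_one_add]
  calc thetaTerm 0 1 * thetaTerm i m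
      = monoL (expo 0 1) * (DtDwL * monoL (expo i m)) * DtDbL ^ i * DtDwL ^ m := by
        simp only [thetaTerm, pow_zero, pow_one, mul_one, mul_assoc]
    _ = _ := by
        rw [DtDwL_mul_monoL_expo, thetaTerm, pow_succ']
        simp only [mul_add, add_mul, mul_smul_comm, smul_mul_assoc, mul_assoc, hc, hM]

theorem thetaTerm_one_zero_mul (i m : ℕ) :
    thetaTerm 1 0 * thetaTerm i m =
      thetaTerm (i + 1) m + (2 * i + m) • (monoL (expo (i + 1) m) * DtDbL ^ i * DtDwL ^ m) := by
  have hM (Z) : monoL (expo 1 0) * (monoL (expo i m) * Z) = monoL (expo (i + 1) m) * Z := by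
    rw [← mul_assoc, monoL_mul_monoL, expo_one_zero_add]
  calc thetaTerm 1 0 * thetaTerm i m
      = monoL (expo 1 0) * (DtDbL * monoL (expo i m)) * DtDbL ^ i * DtDwL ^ m := by
        simp only [thetaTerm, pow_zero, pow_one, mul_one, mul_assoc]
    _ = _ := by
        rw [DtDbL_mul_monoL_expo, thetaTerm, pow_succ']
        simp only [mul_add, add_mul, mul_smul_comm, smul_mul_assoc, mul_assoc, hM]

theorem monoL_expo_mem (i m : ℕ) : monoL (expo i m) ∈ posOps :=
  mulLeft_mem_posOps <| monomial_one_mem_A <| by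
    rw [expo_apply_zero, expo_apply_two, expo_apply_three]
    omega

theorem DtDwL_mem : DtDwL ∈ posOps :=
  weightOp_mem_posOps fun d hd => by
    rw [AddMonoidHom.sub_apply, degreeIn_apply, degreeIn_apply, sub_nonneg]
    exact_mod_cast (by omega : d 3 ≤ d 0)

theorem DtDbL_mem : DtDbL ∈ posOps :=
  weightOp_mem_posOps fun d hd => by
    rw [AddMonoidHom.sub_apply, degreeIn_apply, degreeIn_apply, sub_nonneg]
    exact_mod_cast (by omega : d 2 ≤ d 0)

theorem thetaTerm_mem (i m : ℕ) : thetaTerm i m ∈ posOps :=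
  mul_mem (mul_mem (monoL_expo_mem i m) (pow_mem DtDbL_mem i)) (pow_mem DtDwL_mem m)

theorem ThetaL_mem (k : ℕ) : ThetaL k ∈ posOps :=
  sum_mem fun i _ => nsmul_mem (thetaTerm_mem i _) _

theorem ThetaL_one : ThetaL 1 = 2 • (thetaTerm 0 1 + thetaTerm 1 0) := by
  simp [ThetaL, sum_range_succ, smul_add]

theorem ThetaL_succ (k : ℕ) :
    ThetaL (k + 1) = ∑ i ∈ range (k + 1),
      (2 ^ (k + 1) * k.choose i) • (thetaTerm i (k - i + 1) + thetaTerm (i + 1) (k - i)) := by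
  simp only [ThetaL, mul_comm (2 ^ (k + 1)), mul_smul]
  rw [sum_choose_succ_nsmul (fun i m => 2 ^ (k + 1) • thetaTerm i m) k, ← sum_add_distrib]
  refine sum_congr rfl fun i hi => ?_
  rw [smul_add, smul_add, Nat.sub_add_comm (mem_range_succ_iff.mp hi)]

noncomputable def thetaCorr (i m : ℕ) : Module.End ℝ R4 :=
  (2 * m) • (monoL (expo i (m + 1)) * DtDbL ^ i * DtDwL ^ m) +
    (2 * i + m) • (monoL (expo (i + 1) m) * DtDbL ^ i * DtDwL ^ m)

theorem thetaCorr_mem (i m : ℕ) : thetaCorr i m ∈ posOps := by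
  refine add_mem (nsmul_mem ?_ _) (nsmul_mem ?_ _) <;>
    exact mul_mem (mul_mem (monoL_expo_mem _ _) (pow_mem DtDbL_mem i)) (pow_mem DtDwL_mem m)

theorem ThetaL_one_mul_thetaTerm (i m : ℕ) :
    ThetaL 1 * thetaTerm i m =
      2 • (thetaTerm i (m + 1) + thetaTerm (i + 1) m + thetaCorr i m) := by
  rw [ThetaL_one, smul_mul_assoc, add_mul, thetaTerm_zero_one_mul, thetaTerm_one_zero_mul,
    thetaCorr]
  abel

theorem ThetaL_one_mul_ThetaL (k : ℕ) :
    ThetaL 1 * ThetaL k =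
      ThetaL (k + 1) + ∑ i ∈ range (k + 1), (2 ^ (k + 1) * k.choose i) • thetaCorr i (k - i) := by
  rw [ThetaL_succ k, ThetaL.eq_1 k, mul_sum, ← sum_add_distrib]
  refine sum_congr rfl fun i _ => ?_
  rw [mul_smul_comm, ThetaL_one_mul_thetaTerm, smul_smul, ← smul_add, pow_succ, mul_right_comm]

theorem restL_mem : restL ∈ posOps := by
  have hTW : T ^ 2 * W = monomial (Finsupp.single 0 2 + Finsupp.single 3 1) 1 := by
    rw [T, W, X_pow_eq, X_def, monomial_mul_monomial, one_mul]
  have hT : T ^ 2 = monomial (Finsupp.single 0 2) 1 := X_pow_eq _ _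
  refine nsmul_mem (add_mem (mul_mem ?_ (pderiv_mem_posOps (by decide)))
    (mul_mem ?_ (pderiv_mem_posOps (by decide)))) 2
  · exact mulLeft_mem_posOps (hTW ▸ monomial_one_mem_A (by simp))
  · exact mulLeft_mem_posOps (hT ▸ monomial_one_mem_A (by simp))

theorem LamL_pow_sub_ThetaL_mem {k : ℕ} (hk : 1 ≤ k) : LamL ^ k - ThetaL k ∈ posOps := by
  induction k, hk using Nat.le_induction with
  | base => simpa [LamL] using restL_mem
  | succ n _ ih =>
    have h : LamL ^ (n + 1) - ThetaL (n + 1) = LamL * (LamL ^ n - ThetaL n) + restL * ThetaL n +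
        (ThetaL 1 * ThetaL n - ThetaL (n + 1)) := by
      rw [pow_succ', LamL]
      simp only [mul_sub, add_mul]
      abel
    rw [h, ThetaL_one_mul_ThetaL, add_sub_cancel_left]
    exact add_mem (add_mem (mul_mem (add_mem (ThetaL_mem 1) restL_mem) ih)
      (mul_mem restL_mem (ThetaL_mem n))) (sum_mem fun i _ => nsmul_mem (thetaCorr_mem i _) _)

theorem monomial_expo (i m : ℕ) :
    monomial (expo i m) (1 : ℝ) = T ^ (2 * (i + m)) * B ^ m * W ^ (2 * i) := by
  simp only [T, B, W, X_pow_eq, monomial_mul_monomial, mul_one, expo]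

theorem coe_DtDwL : ⇑DtDwL = DtDw := by
  funext f
  ext d
  rw [DtDwL, coeff_weightOp, AddMonoidHom.sub_apply, degreeIn_apply, degreeIn_apply, sub_mul]
  rfl

theorem coe_DtDbL : ⇑DtDbL = DtDb := by
  funext f
  ext d
  rw [DtDbL, coeff_weightOp, AddMonoidHom.sub_apply, degreeIn_apply, degreeIn_apply, sub_mul]
  rfl

theorem ThetaL_apply (k : ℕ) (f : R4) : ThetaL k f = Theta k f := by
  rw [Theta, mul_sum, smul_sum, ThetaL, LinearMap.sum_apply]
  refine sum_congr rfl fun i hi => ?_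
  rw [LinearMap.smul_apply, thetaTerm, Module.End.mul_apply, Module.End.mul_apply,
    Module.End.pow_apply, Module.End.pow_apply, coe_DtDbL, coe_DtDwL, monoL,
    LinearMap.mulLeft_apply, monomial_expo, Nat.add_sub_cancel' (mem_range_succ_iff.mp hi),
    ← Nat.cast_smul_eq_nsmul ℝ, mul_smul_comm, smul_smul]
  push_cast
  congr 1
  ring

theorem pderiv_eq_pb (f : R4) : pderiv ℝ (2 : Fin 4) f = pb f := by
  ext d
  rw [coeff_pderiv, mul_comm]
  rfl

theorem pderiv_eq_pw (f : R4) : pderiv ℝ (3 : Fin 4) f = pw f := by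
  ext d
  rw [coeff_pderiv, mul_comm]
  rfl

theorem LamL_apply (f : R4) : LamL f = Lam f := by
  have hb : B * pb f = Db f := by rw [← pderiv_eq_pb, B, X_mul_pderiv]; rfl
  have hw : W * pw f = Dw f := by rw [← pderiv_eq_pw, W, X_mul_pderiv]; rfl
  simp only [LamL, ThetaL_one, restL, thetaTerm, LinearMap.add_apply, LinearMap.smul_apply,
    Module.End.mul_apply, pow_zero, pow_one, mul_one, monoL,
    LinearMap.mulLeft_apply, monomial_expo, coe_DtDbL, coe_DtDwL, Derivation.coeFn_coe,
    pderiv_eq_pb, pderiv_eq_pw, DtDb, DtDw, Lam]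
  rw [two_nsmul, two_nsmul]
  linear_combination 2 * T ^ 2 * W ^ 2 * hb + 2 * T ^ 2 * B * hw

/-- for every k ≥ 1,
Λ^k ⪰ 2^k t^{2k} Σ_j C(k,j) ν_w^{2j} ν_b^{k−j} (D_t−D_b)^j (D_t−D_w)^{k−j} ⪰ 0. -/
theorem stmt_6 (k : ℕ) (hk : 1 ≤ k) :
    (∀ f ∈ A, Lam^[k] f - Theta k f ∈ A) ∧ (∀ f ∈ A, Theta k f ∈ A) := by
  have hLam : Lam = ⇑LamL := funext fun f => (LamL_apply f).symm
  refine ⟨fun f hf => ?_, fun f hf => ?_⟩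
  · rw [hLam, ← Module.End.coe_pow, ← ThetaL_apply, ← LinearMap.sub_apply]
    exact LamL_pow_sub_ThetaL_mem hk hf
  · rw [← ThetaL_apply]
    exact ThetaL_mem k hf

end Stmt6
end
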